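/- arXiv:1211.5031 — 4 statements merged into one kernel-verified Lean document; each statement's English description precedes it below -/
import Mathlib

section
/- For every odd natural number k, the complete graph K_{k+1} is k-edge-colorable, i.e., there is a proper edge coloring of K_{k+1} using at most k colors. -/
/-!
Identify the vertices `0, …, k - 1` with the residues mod `k` and call vertex `k` the hub.
Colour `{a, b}` by `a + b` and `{a, hub}` by `2 a`. At a non-hub vertex `a` the colours `a + b`
(`b ≠ a`) are distinct and miss exactly `2 a`, which is the colour of the hub edge; at the hub the
colours `2 b` are distinct because `2` is invertible mod the odd number `k`.
-/

/-- A proper edge coloring of (the edges of) `G` using colors `< k`. -/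
def IsProperEdgeColoring {V : Type*} (G : SimpleGraph V) (k : ℕ) (c : Sym2 V → ℕ) : Prop :=
  (∀ e ∈ G.edgeSet, c e < k) ∧
  ∀ e₁ ∈ G.edgeSet, ∀ e₂ ∈ G.edgeSet, e₁ ≠ e₂ → (∃ v, v ∈ e₁ ∧ v ∈ e₂) → c e₁ ≠ c e₂

theorem isProperEdgeColoring_lift {V : Type*} (G : SimpleGraph V) (k : ℕ) (f : V → V → ℕ)
    (hf : ∀ a b, f a b = f b a) (hlt : ∀ a b, G.Adj a b → f a b < k)
    (hinj : ∀ a b b', G.Adj a b → G.Adj a b' → f a b = f a b' → b = b') :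
    IsProperEdgeColoring G k (Sym2.lift ⟨f, hf⟩) := by
  refine ⟨fun e he => ?_, ?_⟩
  · induction e using Sym2.ind with
    | _ a b => exact hlt a b he
  · rintro e₁ he₁ e₂ he₂ hne ⟨v, hv₁, hv₂⟩ hcol
    obtain ⟨b, rfl⟩ := Sym2.mem_iff_exists.mp hv₁
    obtain ⟨b', rfl⟩ := Sym2.mem_iff_exists.mp hv₂
    exact hne (congrArg _ (hinj v b b' he₁ he₂ hcol))

def edgeCol (k a b : ℕ) : ℕ :=
  if a = k then 2 * b % k else if b = k then 2 * a % k else (a + b) % k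

lemma edgeCol_comm (k a b : ℕ) : edgeCol k a b = edgeCol k b a := by
  unfold edgeCol
  split_ifs <;> simp_all [Nat.add_comm]

lemma edgeCol_lt {k : ℕ} (hk : 0 < k) (a b : ℕ) : edgeCol k a b < k := by
  unfold edgeCol
  split_ifs <;> exact Nat.mod_lt _ hk

lemma edgeCol_hub_inj {k : ℕ} (hk : Odd k) {b b' : ℕ} (hb : b < k) (hb' : b' < k)
    (h : edgeCol k k b = edgeCol k k b') : b = b' := by
  simp only [edgeCol, if_true] at h
  exact (Nat.ModEq.cancel_left_of_coprime (Nat.coprime_two_right.mpr hk) h).eq_of_lt_of_lt hb hb'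

/-- Seen from a non-hub vertex `a`, the hub behaves like a second copy of `a`. -/
lemma edgeCol_of_ne_hub {k a : ℕ} (ha : a ≠ k) (b : ℕ) :
    edgeCol k a b = (a + if b = k then a else b) % k := by
  unfold edgeCol
  split_ifs <;> simp_all [two_mul]

lemma edgeCol_inj_of_lt {k a b b' : ℕ} (ha : a < k) (hb : b ≤ k) (hb' : b' ≤ k)
    (hab : a ≠ b) (hab' : a ≠ b') (h : edgeCol k a b = edgeCol k a b') : b = b' := by
  rw [edgeCol_of_ne_hub ha.ne, edgeCol_of_ne_hub ha.ne] at h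
  have := (Nat.ModEq.add_left_cancel' a h).eq_of_lt_of_lt
    (by split_ifs <;> omega) (by split_ifs <;> omega)
  split_ifs at this <;> omega

lemma edgeCol_inj {k : ℕ} (hk : Odd k) {a b b' : ℕ} (ha : a ≤ k) (hb : b ≤ k) (hb' : b' ≤ k)
    (hab : a ≠ b) (hab' : a ≠ b') (h : edgeCol k a b = edgeCol k a b') : b = b' := by
  rcases ha.lt_or_eq with ha | rfl
  · exact edgeCol_inj_of_lt ha hb hb' hab hab' h
  · exact edgeCol_hub_inj hk (by omega) (by omega) h

/-- For every odd natural number `k`, the complete graph `K_{k+1}` is `k`-edge-colorable. -/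
theorem stmt0 (k : ℕ) (hk : Odd k) :
    ∃ c : Sym2 (Fin (k + 1)) → ℕ,
      IsProperEdgeColoring (SimpleGraph.completeGraph (Fin (k + 1))) k c :=
  ⟨_, isProperEdgeColoring_lift _ k (fun a b : Fin (k + 1) => edgeCol k a b)
    (fun a b => edgeCol_comm k a b)
    (fun a b _ => edgeCol_lt hk.pos a b)
    (fun a b b' hab hab' h => Fin.ext <| edgeCol_inj hk a.is_le b.is_le b'.is_le
      (Fin.val_ne_of_ne hab) (Fin.val_ne_of_ne hab') h)⟩
end

section
/- For every even natural number k, the complete graph K_{k+1} has a k-edge-colorable subgraph with exactly k^2/2 edges; hence c_k(K_{k+1}) = k^2/2, where c_k(G) denotes the maximum number of edges of a k-edge-colorable subgraph of G. -/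
/-!
Upper bound: every colour class of a proper edge colouring is a matching, so on `k + 1`
vertices it has at most `k / 2` edges, and there are `k` classes.

Construction: colour the edge `{a, b}` of `K_{k+1}` by `a + b` in `Fin (k + 1)`; this is proper
because `b ↦ a + b` is injective. Deleting the class `a + b = k` leaves `k` colours. Every vertex
then has degree `k - 1`, except the unique solution `k / 2` of `2 i = k`, which keeps degree `k`;
so the degrees sum to `k ^ 2`.
-/

open Finset

section ColorClasses

variable {V : Type*} [Fintype V] [DecidableEq V] {G : SimpleGraph V} [DecidableRel G.Adj]
  {k : ℕ} {c : Sym2 V → ℕ}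

theorem IsProperEdgeColoring.two_mul_card_colorClass_le (hc : IsProperEdgeColoring G k c)
    (t : ℕ) : 2 * #{e ∈ G.edgeFinset | c e = t} ≤ Fintype.card V := by
  set M := {e ∈ G.edgeFinset | c e = t}
  have hdisj : (M : Set (Sym2 V)).PairwiseDisjoint Sym2.toFinset := by
    intro e₁ h₁ e₂ h₂ hne
    simp only [M, coe_filter, Set.mem_ofPred_eq, SimpleGraph.mem_edgeFinset] at h₁ h₂
    refine Finset.disjoint_left.2 fun v hv₁ hv₂ => ?_
    exact hc.2 e₁ h₁.1 e₂ h₂.1 hne ⟨v, Sym2.mem_toFinset.1 hv₁, Sym2.mem_toFinset.1 hv₂⟩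
      (h₁.2.trans h₂.2.symm)
  calc 2 * #M = ∑ e ∈ M, #e.toFinset := by
        rw [sum_congr rfl fun e he => Sym2.card_toFinset_of_not_isDiag e
          (G.not_isDiag_of_mem_edgeSet (SimpleGraph.mem_edgeFinset.1 (mem_filter.1 he).1)),
          sum_const, smul_eq_mul, mul_comm]
    _ = #(M.biUnion Sym2.toFinset) := (card_biUnion hdisj).symm
    _ ≤ Fintype.card V := card_le_univ _

theorem IsProperEdgeColoring.card_edgeFinset_le (hc : IsProperEdgeColoring G k c) :
    #G.edgeFinset ≤ k * (Fintype.card V / 2) := by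
  have hcover : G.edgeFinset ⊆ (range k).biUnion fun t => {e ∈ G.edgeFinset | c e = t} :=
    fun e he => mem_biUnion.2
      ⟨c e, mem_range.2 (hc.1 e (SimpleGraph.mem_edgeFinset.1 he)), mem_filter.2 ⟨he, rfl⟩⟩
  calc #G.edgeFinset ≤ ∑ t ∈ range k, #{e ∈ G.edgeFinset | c e = t} :=
        (card_le_card hcover).trans card_biUnion_le
    _ ≤ ∑ _t ∈ range k, Fintype.card V / 2 := sum_le_sum fun t _ =>
        (Nat.le_div_iff_mul_le two_pos).2 (by linarith [hc.two_mul_card_colorClass_le t])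
    _ = k * (Fintype.card V / 2) := by rw [sum_const, card_range, smul_eq_mul]

end ColorClasses

theorem Fin.add_self_eq_last_iff {k : ℕ} (hk : Even k) (i : Fin (k + 1)) :
    i + i = Fin.last k ↔ i = ⟨k / 2, by omega⟩ := by
  obtain ⟨m, rfl⟩ := hk
  simp only [Fin.ext_iff, Fin.val_add, Fin.val_last]
  have := i.isLt
  rcases Nat.lt_or_ge (i.val + i.val) (m + m + 1) with h | h
  · rw [Nat.mod_eq_of_lt h]; omega
  · rw [Nat.mod_eq_sub_mod h, Nat.mod_eq_of_lt (by omega)]; omega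

def sumNeLastGraph (k : ℕ) : SimpleGraph (Fin (k + 1)) :=
  SimpleGraph.fromRel fun i j => i + j ≠ Fin.last k

instance (k : ℕ) : DecidableRel (sumNeLastGraph k).Adj :=
  fun _ _ => inferInstanceAs (Decidable (_ ∧ _))

@[simp]
theorem sumNeLastGraph_adj {k : ℕ} {i j : Fin (k + 1)} :
    (sumNeLastGraph k).Adj i j ↔ i ≠ j ∧ i + j ≠ Fin.last k := by
  simp [sumNeLastGraph, add_comm j i]

def sumColoring (k : ℕ) : Sym2 (Fin (k + 1)) → ℕ :=
  Sym2.lift ⟨fun a b => (a + b : Fin (k + 1)), fun a b => congrArg Fin.val (add_comm a b)⟩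

theorem isProperEdgeColoring_sumColoring (k : ℕ) :
    IsProperEdgeColoring (sumNeLastGraph k) k (sumColoring k) := by
  refine ⟨fun e he => ?_, ?_⟩
  · induction e using Sym2.ind with
    | _ a b =>
      have hne : ((a + b : Fin (k + 1)) : ℕ) ≠ k := fun h =>
        (sumNeLastGraph_adj.1 he).2 (Fin.ext h)
      exact lt_of_le_of_ne (Nat.lt_succ_iff.1 (a + b).isLt) hne
  · rintro e₁ - e₂ - hne ⟨v, hv₁, hv₂⟩ hcol
    obtain ⟨b₁, rfl⟩ := Sym2.mem_iff_exists.1 hv₁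
    obtain ⟨b₂, rfl⟩ := Sym2.mem_iff_exists.1 hv₂
    exact hne (by rw [add_left_cancel (Fin.ext hcol : v + b₁ = v + b₂)])

theorem sumNeLastGraph_degree_add_one (k : ℕ) (i : Fin (k + 1)) :
    (sumNeLastGraph k).degree i + 1 = k + if i + i = Fin.last k then 1 else 0 := by
  have hnbr : (sumNeLastGraph k).neighborFinset i = univ \ {i, Fin.last k - i} := by
    ext j
    simp [sub_eq_iff_eq_add', eq_comm (b := i + j), eq_comm (a := j)]
  rw [← SimpleGraph.card_neighborFinset_eq_degree, hnbr, card_univ_sdiff, Fintype.card_fin]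
  split_ifs with h
  · rw [sub_eq_iff_eq_add'.2 h.symm, insert_eq_self.2 (mem_singleton_self i), card_singleton]
    omega
  · have hk : k ≠ 0 := by
      rintro rfl
      exact h (Fin.ext (by omega))
    rw [card_pair fun h' => h (sub_eq_iff_eq_add'.1 h'.symm).symm]
    omega

theorem two_mul_card_edgeFinset_sumNeLastGraph {k : ℕ} (hk : Even k) :
    2 * #(sumNeLastGraph k).edgeFinset = k ^ 2 := by
  have hsum : ∑ i, ((sumNeLastGraph k).degree i + 1) =
      ∑ i : Fin (k + 1), (k + if i + i = Fin.last k then 1 else 0) :=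
    sum_congr rfl fun i _ => sumNeLastGraph_degree_add_one k i
  simp only [sum_add_distrib, Fin.add_self_eq_last_iff hk, sum_ite_eq', mem_univ, if_true,
    sum_const, card_univ, Fintype.card_fin, smul_eq_mul, mul_one,
    SimpleGraph.sum_degrees_eq_twice_card_edges] at hsum
  rw [sq]
  linarith [hsum]

/-- For even `k`, `K_{k+1}` has a `k`-edge-colorable subgraph with exactly `k^2/2` edges;
hence the maximum number of edges of a `k`-edge-colorable subgraph equals `k^2/2`. -/
theorem stmt2 (k : ℕ) (hk : Even k) :
    (∃ H : SimpleGraph (Fin (k + 1)), H ≤ SimpleGraph.completeGraph (Fin (k + 1)) ∧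
      (∃ c, IsProperEdgeColoring H k c) ∧ H.edgeSet.ncard = k ^ 2 / 2) ∧
    (∀ H : SimpleGraph (Fin (k + 1)), H ≤ SimpleGraph.completeGraph (Fin (k + 1)) →
      (∃ c, IsProperEdgeColoring H k c) → H.edgeSet.ncard ≤ k ^ 2 / 2) := by
  classical
  have hhalf : k * ((k + 1) / 2) = k ^ 2 / 2 := by
    obtain ⟨m, rfl⟩ := hk
    rw [show (m + m + 1) / 2 = m by omega, show (m + m) ^ 2 = 2 * ((m + m) * m) by ring,
      Nat.mul_div_cancel_left _ two_pos]
  refine ⟨⟨sumNeLastGraph k, fun _ _ h => (sumNeLastGraph_adj.1 h).1,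
    ⟨_, isProperEdgeColoring_sumColoring k⟩, ?_⟩, fun H _ ⟨c, hc⟩ => ?_⟩
  · rw [← SimpleGraph.coe_edgeFinset, Set.ncard_coe_finset]
    have := two_mul_card_edgeFinset_sumNeLastGraph hk
    omega
  · rw [← SimpleGraph.coe_edgeFinset, Set.ncard_coe_finset, ← hhalf]
    simpa using hc.card_edgeFinset_le
end

section
/- Let G be a graph of maximum degree Δ and π a partial Δ-edge-coloring of G maximizing the number of colored edges. Then every connected component of the graph of uncolored edges has at most ⌊Δ/2⌋ edges. -/
/-- A partial edge coloring of `G` with colors `{1,…,k}`: only edges of `G` may be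
colored, colors lie in `{1,…,k}`, and incident colored edges get distinct colors. -/
def IsPartialEdgeColoring {V : Type*} (G : SimpleGraph V) (k : ℕ) (π : Sym2 V → Option ℕ) : Prop :=
  (∀ e, π e ≠ none → e ∈ G.edgeSet) ∧
  (∀ e c, π e = some c → 1 ≤ c ∧ c ≤ k) ∧
  ∀ e₁ ∈ G.edgeSet, ∀ e₂ ∈ G.edgeSet, e₁ ≠ e₂ → (∃ v, v ∈ e₁ ∧ v ∈ e₂) →
    π e₁ = none ∨ π e₂ = none ∨ π e₁ ≠ π e₂

/-- The set of colored edges of a partial coloring. -/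
def coloredEdges {V : Type*} (π : Sym2 V → Option ℕ) : Set (Sym2 V) := {e | π e ≠ none}

/-- `π` is a partial `k`-edge-coloring of `G` maximizing the number of colored edges. -/
def MaximizesColored {V : Type*} (G : SimpleGraph V) (k : ℕ) (π : Sym2 V → Option ℕ) : Prop :=
  IsPartialEdgeColoring G k π ∧
  ∀ π', IsPartialEdgeColoring G k π' → (coloredEdges π').ncard ≤ (coloredEdges π).ncard

/-- The set of colors from `{1,…,k}` free at `v`, i.e. appearing on no edge incident to `v`. -/
def freeColors {V : Type*} (G : SimpleGraph V) (k : ℕ) (π : Sym2 V → Option ℕ) (v : V) :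
    Set ℕ :=
  {c | 1 ≤ c ∧ c ≤ k ∧ ∀ e ∈ G.edgeSet, v ∈ e → π e ≠ some c}

/-- The graph of uncolored edges. -/
def freeGraph {V : Type*} (G : SimpleGraph V) (π : Sym2 V → Option ℕ) : SimpleGraph V :=
  SimpleGraph.fromRel (fun u v => G.Adj u v ∧ π s(u, v) = none)

/-!
Let `Q` be the component of `v` in the graph of uncolored edges. A vertex `x` of `Q` has at
least `deg_Q x` free colors, and in a maximum coloring the free-color sets of distinct vertices
of `Q` are disjoint, so `2 |E(Q)| ≤ Δ`.

Disjointness goes by induction along an uncolored walk `u v₁ … w`. Suppose `d` is free at both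
`u` and `w`, and let `c` be free at `v₁`. If `d = c`, recurse on `v₁ … w`. Otherwise consider the
`(d, c)`-Kempe chain through `u`: it is a path or a cycle, and `u`, `v₁`, `w` each miss one of
its colors, so it cannot contain all three. If it avoids `v₁`, swapping it makes `c` free at both
ends of the uncolored edge `u v₁`, which can then be colored. If it avoids `w`, swapping it makes
`d` free at `v₁` and still at `w`, and we recurse on `v₁ … w`.
-/

namespace SimpleGraph

variable {V : Type*} {G : SimpleGraph V}

lemma ncard_neighborSet_eq_degree (v : V) [Fintype (G.neighborSet v)] :
    (G.neighborSet v).ncard = G.degree v := by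
  rw [Set.ncard_eq_toFinset_card', ← card_neighborFinset_eq_degree, neighborFinset_def]

lemma reachable_of_mem_edgeSet {e : Sym2 V} (he : e ∈ G.edgeSet) {x y : V} (hx : x ∈ e)
    (hy : y ∈ e) : G.Reachable x y := by
  induction e using Sym2.ind with
  | _ a b =>
    rcases Sym2.mem_iff.mp hx with rfl | rfl <;> rcases Sym2.mem_iff.mp hy with rfl | rfl
    exacts [.refl _, he.reachable, he.symm.reachable, .refl _]

lemma mem_supp_connectedComponentMk_iff {v x : V} :
    x ∈ (G.connectedComponentMk v).supp ↔ G.Reachable v x := by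
  rw [ConnectedComponent.mem_supp_iff, ConnectedComponent.eq]
  exact ⟨Reachable.symm, Reachable.symm⟩

lemma ncard_neighborSet_spanningCoe_toSimpleGraph (C : G.ConnectedComponent) (x : V) :
    (C.toSimpleGraph.spanningCoe.neighborSet x).ncard =
      C.supp.indicator (fun y => (G.neighborSet y).ncard) x := by
  by_cases hx : x ∈ C.supp
  · rw [Set.indicator_of_mem hx]
    congr 1
    ext y
    rw [mem_neighborSet, mem_neighborSet, ConnectedComponent.adj_spanningCoe_toSimpleGraph]
    exact and_iff_right hx
  · rw [Set.indicator_of_notMem hx]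
    convert Set.ncard_empty V
    ext y
    rw [mem_neighborSet, ConnectedComponent.adj_spanningCoe_toSimpleGraph]
    simp [hx]

lemma two_mul_ncard_edgeSet_reachable [Finite V] (v : V) :
    2 * {e ∈ G.edgeSet | ∀ w ∈ e, G.Reachable v w}.ncard =
      ∑ᶠ x ∈ {x | G.Reachable v x}, (G.neighborSet x).ncard := by
  classical
  have := Fintype.ofFinite V
  have hreach : {x | G.Reachable v x} = (G.connectedComponentMk v).supp := by
    ext x; exact mem_supp_connectedComponentMk_iff.symm
  have hedges : {e ∈ G.edgeSet | ∀ w ∈ e, G.Reachable v w} =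
      (G.connectedComponentMk v).toSimpleGraph.spanningCoe.edgeSet := by
    ext e
    induction e using Sym2.ind with
    | _ x y =>
      rw [mem_edgeSet, ConnectedComponent.adj_spanningCoe_toSimpleGraph,
        mem_supp_connectedComponentMk_iff]
      simp only [Set.mem_sep_iff, mem_edgeSet, Sym2.mem_iff, forall_eq_or_imp, forall_eq]
      exact ⟨fun ⟨h, hx, _⟩ => ⟨hx, h⟩, fun ⟨hx, h⟩ => ⟨h, hx, hx.trans h.reachable⟩⟩
  rw [hedges, ← coe_edgeFinset, Set.ncard_coe_finset, ← sum_degrees_eq_twice_card_edges, hreach,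
    finsum_mem_def, finsum_eq_sum_of_fintype]
  refine Finset.sum_congr rfl fun x _ => ?_
  rw [← ncard_neighborSet_eq_degree, ncard_neighborSet_spanningCoe_toSimpleGraph]

lemma Connected.card_le_two_of_degree_le_two [Finite V] (hG : G.Connected)
    (hdeg : ∀ x, (G.neighborSet x).ncard ≤ 2) (s : Finset V)
    (hs : ∀ x ∈ s, (G.neighborSet x).ncard ≤ 1) : s.card ≤ 2 := by
  classical
  have := Fintype.ofFinite V
  -- handshake: `2 * (|V| - 1) ≤ 2 * |E| = ∑ deg ≤ 2 * |V| - |s|`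
  have hpointwise : ∀ x, G.degree x + (if x ∈ s then 1 else 0) ≤ 2 := by
    intro x
    rw [← ncard_neighborSet_eq_degree]
    split_ifs with hx
    · linarith [hs x hx]
    · linarith [hdeg x]
  have hsum : ∑ x, G.degree x + s.card ≤ 2 * Fintype.card V := by
    have := Finset.sum_le_sum fun x (_ : x ∈ Finset.univ) => hpointwise x
    rwa [Finset.sum_add_distrib, Finset.sum_boole, Finset.filter_mem_eq_inter, Finset.univ_inter,
      Finset.sum_const, Finset.card_univ, smul_eq_mul, mul_comm] at this
  have hconn := hG.card_vert_le_card_edgeSet_add_one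
  rw [Nat.card_eq_fintype_card, Nat.card_eq_fintype_card, ← edgeFinset_card] at hconn
  rw [sum_degrees_eq_twice_card_edges] at hsum
  omega

lemma ConnectedComponent.ncard_neighborSet_toSimpleGraph (C : G.ConnectedComponent) (x : C) :
    (C.toSimpleGraph.neighborSet x).ncard = (G.neighborSet x).ncard := by
  have hpre : C.toSimpleGraph.neighborSet x = Subtype.val ⁻¹' G.neighborSet x := by
    ext y; rfl
  rw [hpre, Set.ncard_preimage_of_injective_subset_range Subtype.val_injective]
  intro y hy
  exact ⟨⟨y, C.mem_supp_of_adj_mem_supp x.2 hy⟩, rfl⟩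

lemma eq_or_eq_or_eq_of_reachable_of_ncard_neighborSet_le_one [Finite V]
    (hdeg : ∀ x, (G.neighborSet x).ncard ≤ 2) {u v w : V}
    (hv : G.Reachable u v) (hw : G.Reachable u w) (hu₁ : (G.neighborSet u).ncard ≤ 1)
    (hv₁ : (G.neighborSet v).ncard ≤ 1) (hw₁ : (G.neighborSet w).ncard ≤ 1) :
    u = v ∨ u = w ∨ v = w := by
  classical
  by_contra! hne
  set C := G.connectedComponentMk u
  have hmem : ∀ {x}, G.Reachable u x → x ∈ C.supp := mem_supp_connectedComponentMk_iff.mpr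
  let s : Finset C := {⟨u, hmem (Reachable.refl u)⟩, ⟨v, hmem hv⟩, ⟨w, hmem hw⟩}
  have hs : s.card = 3 := by
    simp [s, Finset.card_insert_of_notMem, hne.1, hne.2.1, hne.2.2]
  have := C.connected_toSimpleGraph.card_le_two_of_degree_le_two
    (fun x => (C.ncard_neighborSet_toSimpleGraph x).trans_le (hdeg x)) s (by
      simp only [s, Finset.mem_insert, Finset.mem_singleton, C.ncard_neighborSet_toSimpleGraph]
      rintro x (rfl | rfl | rfl) <;> assumption)
  omega

end SimpleGraph

open SimpleGraph

section PartialColoring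

variable {V : Type*} {G : SimpleGraph V} {k : ℕ} {π : Sym2 V → Option ℕ}

lemma freeGraph_adj {x y : V} : (freeGraph G π).Adj x y ↔ G.Adj x y ∧ π s(x, y) = none := by
  rw [freeGraph, fromRel_adj]
  constructor
  · rintro ⟨-, h | ⟨hyx, hnone⟩⟩
    · exact h
    · exact ⟨hyx.symm, Sym2.eq_swap ▸ hnone⟩
  · rintro ⟨hxy, hnone⟩
    exact ⟨hxy.ne, Or.inl ⟨hxy, hnone⟩⟩

lemma IsPartialEdgeColoring.eq_of_color_eq (hπ : IsPartialEdgeColoring G k π) {x y z : V}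
    (hy : G.Adj x y) (hz : G.Adj x z) (hcol : π s(x, y) ≠ none)
    (h : π s(x, y) = π s(x, z)) : y = z := by
  by_contra hyz
  rcases hπ.2.2 _ hy _ hz (fun he => hyz (Sym2.congr_right.mp he))
    ⟨x, Sym2.mem_mk_left x y, Sym2.mem_mk_left x z⟩ with h' | h' | h'
  · exact hcol h'
  · exact hcol (h.trans h')
  · exact h' h

lemma freeColors_subset_Icc {w : V} : freeColors G k π w ⊆ Set.Icc 1 k :=
  fun _ hc => ⟨hc.1, hc.2.1⟩

lemma finite_freeColors {w : V} : (freeColors G k π w).Finite :=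
  (Set.finite_Icc 1 k).subset freeColors_subset_Icc

/-- Every color of `{1,…,k}` is free at `w` or used on a colored edge at `w`, and `w` has at
most `k` edges. -/
lemma ncard_neighborSet_freeGraph_le [Finite V] {w : V} (hw : (G.neighborSet w).ncard ≤ k) :
    ((freeGraph G π).neighborSet w).ncard ≤ (freeColors G k π w).ncard := by
  set colored := {y | G.Adj w y ∧ π s(w, y) ≠ none}
  have hsplit : G.neighborSet w = (freeGraph G π).neighborSet w ∪ colored := by
    ext y
    simp only [mem_neighborSet, freeGraph_adj, Set.mem_union, Set.mem_ofPred_eq, colored]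
    tauto
  have hdisj : Disjoint ((freeGraph G π).neighborSet w) colored := by
    rw [Set.disjoint_left]
    intro y hy hy'
    exact hy'.2 (freeGraph_adj.mp hy).2
  have hcover : Set.Icc 1 k ⊆ freeColors G k π w ∪ (fun y => (π s(w, y)).getD 0) '' colored := by
    rintro c ⟨hc1, hck⟩
    by_contra hnot
    simp only [Set.mem_union, Set.mem_image, not_or] at hnot
    refine hnot.1 ⟨hc1, hck, fun e he hwe hec => hnot.2 ?_⟩
    obtain ⟨y, rfl⟩ := Sym2.mem_iff_exists.mp hwe
    exact ⟨y, ⟨he, by simp [hec]⟩, by simp [hec]⟩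
  have hk : k ≤ (freeColors G k π w).ncard + colored.ncard := by
    calc k = (Set.Icc 1 k).ncard := by simp
      _ ≤ (freeColors G k π w ∪ (fun y => (π s(w, y)).getD 0) '' colored).ncard :=
        Set.ncard_le_ncard hcover (finite_freeColors.union (Set.toFinite _))
      _ ≤ (freeColors G k π w).ncard + ((fun y => (π s(w, y)).getD 0) '' colored).ncard :=
        Set.ncard_union_le _ _
      _ ≤ (freeColors G k π w).ncard + colored.ncard := by
        gcongr; exact Set.ncard_image_le (Set.toFinite _)
  rw [hsplit, Set.ncard_union_eq hdisj] at hw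
  omega

lemma freeColors_nonempty_of_freeGraph_adj [Finite V] {w x : V}
    (hw : (G.neighborSet w).ncard ≤ k) (h : (freeGraph G π).Adj w x) :
    (freeColors G k π w).Nonempty := by
  apply Set.nonempty_of_ncard_ne_zero
  have hpos : 0 < ((freeGraph G π).neighborSet w).ncard := (Set.ncard_pos).mpr ⟨x, h⟩
  have := ncard_neighborSet_freeGraph_le (π := π) hw
  omega

lemma IsPartialEdgeColoring.update [DecidableEq V] (hπ : IsPartialEdgeColoring G k π)
    {x y : V} {d : ℕ} (hxy : G.Adj x y) (hdx : d ∈ freeColors G k π x)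
    (hdy : d ∈ freeColors G k π y) :
    IsPartialEdgeColoring G k (Function.update π s(x, y) (some d)) := by
  have hfree : ∀ e ∈ G.edgeSet, ∀ z ∈ e, z ∈ s(x, y) → π e ≠ some d := by
    intro e he z hze hz
    rcases Sym2.mem_iff.mp hz with rfl | rfl
    · exact hdx.2.2 e he hze
    · exact hdy.2.2 e he hze
  refine ⟨fun e he => ?_, fun e c hc => ?_, fun e₁ he₁ e₂ he₂ hne ⟨z, hz₁, hz₂⟩ => ?_⟩
  · rcases eq_or_ne e s(x, y) with rfl | h
    · exact hxy
    · exact hπ.1 e (by rwa [Function.update_of_ne h] at he)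
  · rcases eq_or_ne e s(x, y) with rfl | h
    · obtain rfl : d = c := by simpa using hc
      exact ⟨hdx.1, hdx.2.1⟩
    · exact hπ.2.1 e c (by rwa [Function.update_of_ne h] at hc)
  · rcases eq_or_ne e₁ s(x, y) with rfl | h₁ <;> rcases eq_or_ne e₂ s(x, y) with rfl | h₂
    · exact absurd rfl hne
    · rw [Function.update_self, Function.update_of_ne h₂]
      exact Or.inr (Or.inr (hfree e₂ he₂ z hz₂ hz₁).symm)
    · rw [Function.update_self, Function.update_of_ne h₁]
      exact Or.inr (Or.inr (hfree e₁ he₁ z hz₁ hz₂))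
    · rw [Function.update_of_ne h₁, Function.update_of_ne h₂]
      exact hπ.2.2 e₁ he₁ e₂ he₂ hne ⟨z, hz₁, hz₂⟩

lemma MaximizesColored.disjoint_freeColors_of_freeGraph_adj [Finite V]
    (hmax : MaximizesColored G k π) {x y : V} (h : (freeGraph G π).Adj x y) :
    Disjoint (freeColors G k π x) (freeColors G k π y) := by
  classical
  rw [Set.disjoint_left]
  intro d hdx hdy
  obtain ⟨hxy, hnone⟩ := freeGraph_adj.mp h
  have hcolored : coloredEdges (Function.update π s(x, y) (some d)) =
      insert s(x, y) (coloredEdges π) := by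
    ext e
    rcases eq_or_ne e s(x, y) with rfl | he
    · simp [coloredEdges]
    · simp [coloredEdges, he]
  have hle := hmax.2 _ (hmax.1.update hxy hdx hdy)
  rw [hcolored, Set.ncard_insert_of_notMem (by simpa [coloredEdges] using hnone)] at hle
  omega

end PartialColoring

section Kempe

variable {V : Type*} {G : SimpleGraph V} {k : ℕ} {π : Sym2 V → Option ℕ} {c c' : ℕ} {u : V}

/-- Its components are the `(c, c')`-Kempe chains. -/
def kempeGraph (G : SimpleGraph V) (π : Sym2 V → Option ℕ) (c c' : ℕ) : SimpleGraph V :=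
  fromEdgeSet {e ∈ G.edgeSet | π e = some c ∨ π e = some c'}

lemma mem_edgeSet_kempeGraph {e : Sym2 V} :
    e ∈ (kempeGraph G π c c').edgeSet ↔ e ∈ G.edgeSet ∧ (π e = some c ∨ π e = some c') := by
  rw [kempeGraph, edgeSet_fromEdgeSet, Set.mem_sdiff, Set.mem_sep_iff]
  exact ⟨fun h => h.1, fun h => ⟨h, G.not_isDiag_of_mem_edgeSet h.1⟩⟩

lemma kempeGraph_adj {x y : V} :
    (kempeGraph G π c c').Adj x y ↔ G.Adj x y ∧ (π s(x, y) = some c ∨ π s(x, y) = some c') := by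
  rw [← mem_edgeSet, mem_edgeSet_kempeGraph, mem_edgeSet]

lemma kempeGraph_comm : kempeGraph G π c c' = kempeGraph G π c' c := by
  simp only [kempeGraph, or_comm]

lemma IsPartialEdgeColoring.ncard_neighborSet_kempeGraph_le (hπ : IsPartialEdgeColoring G k π)
    {x : V} {t : Set (Option ℕ)} (ht : t.Finite)
    (hmaps : ∀ y, (kempeGraph G π c c').Adj x y → π s(x, y) ∈ t) :
    ((kempeGraph G π c c').neighborSet x).ncard ≤ t.ncard := by
  refine Set.ncard_le_ncard_of_injOn (fun y => π s(x, y)) hmaps (fun y hy z hz h => ?_) ht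
  obtain ⟨hy, hcy⟩ := kempeGraph_adj.mp hy
  refine hπ.eq_of_color_eq hy (kempeGraph_adj.mp hz).1 ?_ h
  rcases hcy with hcy | hcy <;> simp [hcy]

lemma IsPartialEdgeColoring.ncard_neighborSet_kempeGraph_le_two
    (hπ : IsPartialEdgeColoring G k π) (x : V) :
    ((kempeGraph G π c c').neighborSet x).ncard ≤ 2 := by
  refine (hπ.ncard_neighborSet_kempeGraph_le (Set.toFinite {some c, some c'})
    fun y hy => (kempeGraph_adj.mp hy).2).trans ?_
  exact (Set.ncard_insert_le _ _).trans (by simp)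

lemma IsPartialEdgeColoring.ncard_neighborSet_kempeGraph_le_one
    (hπ : IsPartialEdgeColoring G k π) {x : V} (hx : c ∈ freeColors G k π x) :
    ((kempeGraph G π c c').neighborSet x).ncard ≤ 1 := by
  refine (hπ.ncard_neighborSet_kempeGraph_le (Set.toFinite {some c'}) fun y hy => ?_).trans
    (by simp)
  obtain ⟨hxy, hcy⟩ := kempeGraph_adj.mp hy
  exact hcy.resolve_left (hx.2.2 _ hxy (Sym2.mem_mk_left x y))

open Classical in
/-- Swap `c` and `c'` on the Kempe chain through `u`. The swap is applied to every edge with both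
ends on the chain; it fixes all other colors, so only the chain's own edges change. -/
noncomputable def kempeSwap (G : SimpleGraph V) (π : Sym2 V → Option ℕ) (c c' : ℕ) (u : V) :
    Sym2 V → Option ℕ := fun e =>
  if ∀ x ∈ e, (kempeGraph G π c c').Reachable u x then (π e).map (Equiv.swap c c') else π e

lemma kempeSwap_comm : kempeSwap G π c c' u = kempeSwap G π c' c u := by
  unfold kempeSwap
  rw [kempeGraph_comm, Equiv.swap_comm]

lemma kempeSwap_eq_none_iff {e : Sym2 V} : kempeSwap G π c c' u e = none ↔ π e = none := by
  unfold kempeSwap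
  split_ifs <;> simp

lemma IsPartialEdgeColoring.kempeSwap_of_reachable (hπ : IsPartialEdgeColoring G k π)
    {e : Sym2 V} {z : V} (hz : z ∈ e)
    (hr : (kempeGraph G π c c').Reachable u z) :
    kempeSwap G π c c' u e = (π e).map (Equiv.swap c c') := by
  unfold kempeSwap
  split_ifs with hchain
  · rfl
  · have hne : ∀ d, π e = some d → d ≠ c ∧ d ≠ c' := by
      intro d hd
      refine ⟨?_, ?_⟩ <;> rintro rfl <;> refine hchain fun x hx => hr.trans ?_ <;>
        exact reachable_of_mem_edgeSet
          (mem_edgeSet_kempeGraph.mpr ⟨hπ.1 e (by simp [hd]), by simp [hd]⟩) hz hx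
    cases hd : π e with
    | none => rfl
    | some d => simp [Equiv.swap_apply_of_ne_of_ne (hne d hd).1 (hne d hd).2]

lemma kempeSwap_of_not_reachable {e : Sym2 V} {z : V} (hz : z ∈ e)
    (hr : ¬ (kempeGraph G π c c').Reachable u z) : kempeSwap G π c c' u e = π e := by
  unfold kempeSwap
  rw [if_neg fun h => hr (h z hz)]

lemma coloredEdges_kempeSwap : coloredEdges (kempeSwap G π c c' u) = coloredEdges π := by
  ext e
  exact kempeSwap_eq_none_iff.not

lemma freeGraph_kempeSwap : freeGraph G (kempeSwap G π c c' u) = freeGraph G π := by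
  ext x y
  rw [freeGraph_adj, freeGraph_adj, kempeSwap_eq_none_iff]

lemma isPartialEdgeColoring_kempeSwap (hπ : IsPartialEdgeColoring G k π)
    (hc : c ∈ Set.Icc 1 k) (hc' : c' ∈ Set.Icc 1 k) :
    IsPartialEdgeColoring G k (kempeSwap G π c c' u) := by
  refine ⟨fun e he => hπ.1 e (kempeSwap_eq_none_iff.not.mp he), fun e d hd => ?_,
    fun e₁ he₁ e₂ he₂ hne ⟨z, hz₁, hz₂⟩ => ?_⟩
  · have hσ : ∀ a ∈ Set.Icc 1 k, Equiv.swap c c' a ∈ Set.Icc 1 k := by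
      intro a ha
      rw [Equiv.swap_apply_def]
      split_ifs <;> assumption
    unfold kempeSwap at hd
    split_ifs at hd
    · obtain ⟨a, ha, rfl⟩ := Option.map_eq_some_iff.mp hd
      exact hσ a (hπ.2.1 e a ha)
    · exact hπ.2.1 e d hd
  · by_cases hr : (kempeGraph G π c c').Reachable u z
    · rw [hπ.kempeSwap_of_reachable hz₁ hr, hπ.kempeSwap_of_reachable hz₂ hr]
      rcases hπ.2.2 e₁ he₁ e₂ he₂ hne ⟨z, hz₁, hz₂⟩ with h | h | h
      · simp [h]
      · simp [h]
      · exact Or.inr (Or.inr ((Option.map_injective (Equiv.injective _)).ne h))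
    · rw [kempeSwap_of_not_reachable hz₁ hr, kempeSwap_of_not_reachable hz₂ hr]
      exact hπ.2.2 e₁ he₁ e₂ he₂ hne ⟨z, hz₁, hz₂⟩

lemma maximizesColored_kempeSwap (hmax : MaximizesColored G k π)
    (hc : c ∈ Set.Icc 1 k) (hc' : c' ∈ Set.Icc 1 k) :
    MaximizesColored G k (kempeSwap G π c c' u) :=
  ⟨isPartialEdgeColoring_kempeSwap hmax.1 hc hc', fun π' hπ' => by
    rw [coloredEdges_kempeSwap]; exact hmax.2 π' hπ'⟩

lemma IsPartialEdgeColoring.mem_freeColors_kempeSwap_of_reachable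
    (hπ : IsPartialEdgeColoring G k π) {x : V} (hr : (kempeGraph G π c c').Reachable u x)
    (hc : c ∈ freeColors G k π x) (hc' : c' ∈ Set.Icc 1 k) :
    c' ∈ freeColors G k (kempeSwap G π c c' u) x := by
  refine ⟨hc'.1, hc'.2, fun e he hxe h => hc.2.2 e he hxe ?_⟩
  rw [hπ.kempeSwap_of_reachable hxe hr, Option.map_eq_some_iff] at h
  obtain ⟨a, ha, hac⟩ := h
  rw [Equiv.swap_apply_eq_iff, Equiv.swap_apply_right] at hac
  rwa [hac] at ha

lemma mem_freeColors_kempeSwap_of_not_reachable {x : V}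
    (hr : ¬ (kempeGraph G π c c').Reachable u x) {d : ℕ} (hd : d ∈ freeColors G k π x) :
    d ∈ freeColors G k (kempeSwap G π c c' u) x :=
  ⟨hd.1, hd.2.1, fun e he hxe => kempeSwap_of_not_reachable hxe hr ▸ hd.2.2 e he hxe⟩

end Kempe

section Main

variable {V : Type*} [Finite V] {G : SimpleGraph V} {Δ : ℕ} {π : Sym2 V → Option ℕ}

theorem MaximizesColored.disjoint_freeColors_of_reachable
    (hdeg : ∀ v : V, (G.neighborSet v).ncard ≤ Δ) (hmax : MaximizesColored G Δ π) {u w : V}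
    (huw : (freeGraph G π).Reachable u w) (hne : u ≠ w) :
    Disjoint (freeColors G Δ π u) (freeColors G Δ π w) := by
  obtain ⟨p⟩ := huw
  generalize hF : freeGraph G π = F at p
  induction p generalizing π with
  | nil => exact absurd rfl hne
  | @cons u v w huv q ih =>
    subst hF
    rw [Set.disjoint_left]
    intro d hdu hdw
    by_cases hvw : v = w
    · subst hvw
      exact Set.disjoint_left.mp (hmax.disjoint_freeColors_of_freeGraph_adj huv) hdu hdw
    obtain ⟨c, hcv⟩ := freeColors_nonempty_of_freeGraph_adj (hdeg v) huv.symm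
    by_cases hdc : d = c
    · subst hdc
      exact Set.disjoint_left.mp (ih hmax hvw rfl) hcv hdw
    have hd : d ∈ Set.Icc 1 Δ := ⟨hdu.1, hdu.2.1⟩
    have hc : c ∈ Set.Icc 1 Δ := ⟨hcv.1, hcv.2.1⟩
    have hmax' := maximizesColored_kempeSwap (u := u) hmax hd hc
    by_cases hv : (kempeGraph G π d c).Reachable u v
    · -- `u`, `v` and `w` each miss `d` or `c`, so they would be three ends of one chain
      have hw : ¬ (kempeGraph G π d c).Reachable u w := by
        intro hw
        have hv₁ := hmax.1.ncard_neighborSet_kempeGraph_le_one (c' := d) hcv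
        rw [← kempeGraph_comm] at hv₁
        rcases eq_or_eq_or_eq_of_reachable_of_ncard_neighborSet_le_one
          hmax.1.ncard_neighborSet_kempeGraph_le_two hv hw
          (hmax.1.ncard_neighborSet_kempeGraph_le_one hdu) hv₁
          (hmax.1.ncard_neighborSet_kempeGraph_le_one hdw) with h | h | h
        exacts [huv.ne h, hne h, hvw h]
      have hdv' : d ∈ freeColors G Δ (kempeSwap G π d c u) v := by
        rw [kempeGraph_comm] at hv
        rw [kempeSwap_comm]
        exact hmax.1.mem_freeColors_kempeSwap_of_reachable hv hcv hd
      exact Set.disjoint_left.mp (ih hmax' hvw freeGraph_kempeSwap) hdv'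
        (mem_freeColors_kempeSwap_of_not_reachable hw hdw)
    · exact Set.disjoint_left.mp
        (hmax'.disjoint_freeColors_of_freeGraph_adj (by rwa [freeGraph_kempeSwap]))
        (hmax.1.mem_freeColors_kempeSwap_of_reachable (.refl u) hdu hc)
        (mem_freeColors_kempeSwap_of_not_reachable hv hcv)

end Main

/-- In a partial `Δ`-edge-coloring maximizing the number of colored edges of a graph of maximum
degree `Δ`, every connected component of the graph of uncolored edges has at most `⌊Δ/2⌋`
edges. -/
theorem stmt6 {V : Type*} [Fintype V] (G : SimpleGraph V) (Δ : ℕ)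
    (hdeg : ∀ v : V, (G.neighborSet v).ncard ≤ Δ)
    (π : Sym2 V → Option ℕ) (hmax : MaximizesColored G Δ π) (v : V) :
    {e ∈ (freeGraph G π).edgeSet | ∀ w ∈ e, (freeGraph G π).Reachable v w}.ncard ≤ Δ / 2 := by
  set Q := {x | (freeGraph G π).Reachable v x}
  have hQ : Q.Finite := Set.toFinite Q
  have hdisj : Q.PairwiseDisjoint (freeColors G Δ π) := fun x hx y hy hxy =>
    hmax.disjoint_freeColors_of_reachable hdeg (Reachable.trans (Reachable.symm hx) hy) hxy
  rw [Nat.le_div_iff_mul_le two_pos, mul_comm, two_mul_ncard_edgeSet_reachable]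
  calc ∑ᶠ x ∈ Q, ((freeGraph G π).neighborSet x).ncard
      ≤ ∑ᶠ x ∈ Q, (freeColors G Δ π x).ncard := by
        rw [finsum_mem_eq_finite_toFinset_sum _ hQ, finsum_mem_eq_finite_toFinset_sum _ hQ]
        exact Finset.sum_le_sum fun x _ => ncard_neighborSet_freeGraph_le (hdeg x)
    _ = (⋃ x ∈ Q, freeColors G Δ π x).ncard :=
        (hQ.ncard_biUnion (fun x _ => finite_freeColors) hdisj).symm
    _ ≤ (Set.Icc 1 Δ).ncard :=
        Set.ncard_le_ncard (Set.iUnion₂_subset fun x _ => freeColors_subset_Icc)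
          (Set.finite_Icc 1 Δ)
    _ = Δ := by simp
end

section
/- Let G be a graph of maximum degree k, F a maximum k-matching of G, and OPT a maximum k-edge-colorable subgraph of G. Let Γ̄ be a set of connected components Q of F such that no edge of OPT joins V(Q) to its complement, and suppose every induced subgraph of OPT on V(Q) has at most c_k(Q) edges. Then |E(OPT)| ≤ |E(F)| − Σ_{Q∈Γ̄} (|E(Q)| − c_k(Q)). -/
/-- `ck k G` is the maximum number of edges of a `k`-edge-colorable subgraph of `G`. -/
noncomputable def ck {V : Type*} (k : ℕ) (G : SimpleGraph V) : ℕ :=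
  sSup {n | ∃ H : SimpleGraph V, H ≤ G ∧ (∃ c, IsProperEdgeColoring H k c) ∧
    H.edgeSet.ncard = n}

/-!
Glue OPT outside the union `S` of the components in `Γ` to `F` inside `S`. Since no edge of
OPT leaves `S` and a `k`-edge-colorable graph has maximum degree at most `k`, this is a
`k`-matching of `G`, so by maximality of `F` it has at most `|E(F)|` edges. Inside `S` the graph OPT has at most `∑ c_k(Q)` edges, whereas
`F` has `∑ |E(Q)|`; comparing the two decompositions gives the bound.
-/

lemma Set.sep_forall_mem_eq_inter_sym2 {α : Type*} (X : Set (Sym2 α)) (s : Set α) :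
    {e ∈ X | ∀ w ∈ e, w ∈ s} = X ∩ s.sym2 := by
  ext e
  simp [Set.mem_sym2_iff_subset, Set.subset_def]

lemma ck_le_ncard_edgeSet {W : Type*} [Finite W] (k : ℕ) (H : SimpleGraph W) :
    ck k H ≤ H.edgeSet.ncard := by
  refine csSup_le ⟨0, ⊥, bot_le, ⟨0, by simp [IsProperEdgeColoring]⟩, by simp⟩ ?_
  rintro n ⟨H', hle, -, rfl⟩
  exact Set.ncard_le_ncard (SimpleGraph.edgeSet_mono hle)

lemma IsProperEdgeColoring.ncard_neighborSet_le {V : Type*} {H : SimpleGraph V} {k : ℕ}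
    {c : Sym2 V → ℕ} (hc : IsProperEdgeColoring H k c) (v : V) :
    (H.neighborSet v).ncard ≤ k := by
  have hinj : Set.InjOn (fun w => c s(v, w)) (H.neighborSet v) := by
    intro w₁ hw₁ w₂ hw₂ hcw
    by_contra hne
    exact hc.2 _ hw₁ _ hw₂ (fun h => hne (Sym2.congr_right.mp h)) ⟨v, by simp, by simp⟩ hcw
  calc (H.neighborSet v).ncard ≤ (Finset.range k : Set ℕ).ncard :=
        Set.ncard_le_ncard_of_injOn _ (fun w hw => by simpa using hc.1 _ hw) hinj
    _ = k := by simp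

namespace SimpleGraph

variable {V : Type*}

lemma ncard_edgeSet_induce (G : SimpleGraph V) (s : Set V) :
    (G.induce s).edgeSet.ncard = (G.edgeSet ∩ s.sym2).ncard := by
  rw [← Set.ncard_image_of_injective _ (Sym2.map.injective Subtype.val_injective)]
  congr 1
  ext e
  induction e using Sym2.ind with
  | _ u v =>
    simp only [Set.mem_image, Sym2.exists, mem_edgeSet, comap_adj, Function.Embedding.coe_subtype,
      Sym2.map_mk, Sym2.eq_iff, Set.mem_inter_iff, Set.mk_mem_sym2_iff]
    constructor
    · rintro ⟨⟨a, ha⟩, ⟨b, hb⟩, hab, ⟨rfl, rfl⟩ | ⟨rfl, rfl⟩⟩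
      exacts [⟨hab, ha, hb⟩, ⟨hab.symm, hb, ha⟩]
    · rintro ⟨huv, hu, hv⟩
      exact ⟨⟨u, hu⟩, ⟨v, hv⟩, huv, .inl ⟨rfl, rfl⟩⟩

section

variable [Finite V] (H : SimpleGraph V)

lemma ncard_edgeSet_inter_sym2_union {s t : Set V}
    (hs : ∀ u v, H.Adj u v → (u ∈ s ↔ v ∈ s)) (hst : Disjoint s t) :
    (H.edgeSet ∩ (s ∪ t).sym2).ncard =
      (H.edgeSet ∩ s.sym2).ncard + (H.edgeSet ∩ t.sym2).ncard := by
  rw [← Set.ncard_union_eq]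
  · congr 1
    ext e
    induction e using Sym2.ind with
    | _ u v =>
      simp only [Set.mem_inter_iff, mem_edgeSet, Set.mk_mem_sym2_iff, Set.mem_union]
      have := hs u v
      have := hst.ne_of_mem (a := u) (b := v)
      tauto
  · rw [Set.disjoint_left]
    rintro e ⟨-, he⟩ ⟨-, he'⟩
    induction e using Sym2.ind with
    | _ u v =>
      exact hst.ne_of_mem (Set.mk_mem_sym2_iff.mp he).1 (Set.mk_mem_sym2_iff.mp he').1 rfl

lemma ncard_edgeSet_eq_inter_sym2_add_compl {s : Set V}
    (hs : ∀ u v, H.Adj u v → (u ∈ s ↔ v ∈ s)) :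
    H.edgeSet.ncard = (H.edgeSet ∩ s.sym2).ncard + (H.edgeSet ∩ sᶜ.sym2).ncard := by
  rw [← ncard_edgeSet_inter_sym2_union H hs disjoint_compl_right, Set.union_compl_self,
    Set.sym2_univ, Set.inter_univ]

lemma ncard_edgeSet_inter_sym2_biUnion {ι : Type*} (t : Finset ι) (s : ι → Set V)
    (hdisj : (t : Set ι).PairwiseDisjoint s)
    (hs : ∀ i ∈ t, ∀ u v, H.Adj u v → (u ∈ s i ↔ v ∈ s i)) :
    (H.edgeSet ∩ (⋃ i ∈ t, s i).sym2).ncard =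
      ∑ i ∈ t, (H.edgeSet ∩ (s i).sym2).ncard := by
  classical
  induction t using Finset.induction_on with
  | empty => simp
  | insert a t ha ih =>
    rw [Finset.sum_insert ha, Finset.set_biUnion_insert,
      ncard_edgeSet_inter_sym2_union H (hs a (t.mem_insert_self a)), ih]
    · exact hdisj.subset (Finset.coe_subset.mpr (t.subset_insert a))
    · exact fun i hi => hs i (Finset.mem_insert_of_mem hi)
    · exact Set.disjoint_iUnion₂_right.mpr fun i hi =>
        hdisj (t.mem_insert_self a) (Finset.mem_insert_of_mem hi) (by rintro rfl; exact ha hi)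

end

def piecewise (s : Set V) (A B : SimpleGraph V) : SimpleGraph V where
  Adj u v := (u ∈ s ∧ v ∈ s ∧ A.Adj u v) ∨ (u ∉ s ∧ v ∉ s ∧ B.Adj u v)
  symm := ⟨fun _ _ => by
    rintro (⟨hu, hv, h⟩ | ⟨hu, hv, h⟩)
    exacts [.inl ⟨hv, hu, h.symm⟩, .inr ⟨hv, hu, h.symm⟩]⟩
  loopless := ⟨fun _ => by rintro (⟨-, -, h⟩ | ⟨-, -, h⟩) <;> exact h.ne rfl⟩

variable {s : Set V} {A B G : SimpleGraph V}

@[simp]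
lemma piecewise_adj {u v : V} :
    (piecewise s A B).Adj u v ↔
      (u ∈ s ∧ v ∈ s ∧ A.Adj u v) ∨ (u ∉ s ∧ v ∉ s ∧ B.Adj u v) :=
  Iff.rfl

lemma piecewise_le (hA : A ≤ G) (hB : B ≤ G) : piecewise s A B ≤ G := by
  intro u v huv
  obtain ⟨-, -, h⟩ | ⟨-, -, h⟩ := piecewise_adj.mp huv
  exacts [hA h, hB h]

lemma ncard_neighborSet_piecewise_le [Finite V] {k : ℕ}
    (hA : ∀ v, (A.neighborSet v).ncard ≤ k) (hB : ∀ v, (B.neighborSet v).ncard ≤ k)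
    (v : V) :
    ((piecewise s A B).neighborSet v).ncard ≤ k := by
  by_cases hv : v ∈ s
  · refine (Set.ncard_le_ncard ?_).trans (hA v)
    intro w hw
    obtain ⟨-, -, h⟩ | ⟨hv', -, -⟩ := piecewise_adj.mp hw
    exacts [h, absurd hv hv']
  · refine (Set.ncard_le_ncard ?_).trans (hB v)
    intro w hw
    obtain ⟨hv', -, -⟩ | ⟨-, -, h⟩ := piecewise_adj.mp hw
    exacts [absurd hv' hv, h]

lemma ncard_edgeSet_piecewise [Finite V] :
    (piecewise s A B).edgeSet.ncard =
      (A.edgeSet ∩ s.sym2).ncard + (B.edgeSet ∩ sᶜ.sym2).ncard := by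
  rw [ncard_edgeSet_eq_inter_sym2_add_compl _ (s := s)]
  · congr 2 <;> ext e <;> induction e using Sym2.ind with
    | _ u v =>
      simp only [Set.mem_inter_iff, mem_edgeSet, piecewise_adj, Set.mk_mem_sym2_iff,
        Set.mem_compl_iff]
      tauto
  · intro u v huv
    obtain ⟨hu, hv, -⟩ | ⟨hu, hv, -⟩ := piecewise_adj.mp huv <;> tauto

end SimpleGraph

open SimpleGraph

theorem stmt16_general {V : Type*} [Fintype V] (k : ℕ) (G F OPT : SimpleGraph V)
    (hFle : F ≤ G) (hFdeg : ∀ v : V, (F.neighborSet v).ncard ≤ k)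
    (hFmax : ∀ K : SimpleGraph V, K ≤ G → (∀ v : V, (K.neighborSet v).ncard ≤ k) →
      K.edgeSet.ncard ≤ F.edgeSet.ncard)
    (hOle : OPT ≤ G) (hOcol : ∃ c, IsProperEdgeColoring OPT k c)
    (Γ : Finset F.ConnectedComponent)
    (hsep : ∀ Q ∈ Γ, ∀ u v : V, OPT.Adj u v → (u ∈ Q.supp ↔ v ∈ Q.supp))
    (hind : ∀ Q ∈ Γ, {e ∈ OPT.edgeSet | ∀ w ∈ e, w ∈ Q.supp}.ncard ≤
      ck k (SimpleGraph.induce Q.supp F)) :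
    OPT.edgeSet.ncard ≤ F.edgeSet.ncard -
      ∑ Q ∈ Γ, ((SimpleGraph.induce Q.supp F).edgeSet.ncard -
        ck k (SimpleGraph.induce Q.supp F)) := by
  obtain ⟨c, hc⟩ := hOcol
  set S := ⋃ Q ∈ Γ, Q.supp
  have hdisj : (Γ : Set F.ConnectedComponent).PairwiseDisjoint (·.supp) :=
    (pairwise_disjoint_supp_connectedComponent F).set_pairwise _
  have hOPT_S : (OPT.edgeSet ∩ S.sym2).ncard ≤ ∑ Q ∈ Γ, ck k (F.induce Q.supp) := by
    rw [ncard_edgeSet_inter_sym2_biUnion OPT Γ _ hdisj hsep]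
    refine Finset.sum_le_sum fun Q hQ => ?_
    rw [← Set.sep_forall_mem_eq_inter_sym2]
    exact hind Q hQ
  have hF_S : (F.edgeSet ∩ S.sym2).ncard = ∑ Q ∈ Γ, (F.induce Q.supp).edgeSet.ncard := by
    rw [ncard_edgeSet_inter_sym2_biUnion F Γ _ hdisj fun Q _ _ _ => Q.mem_supp_congr_adj]
    simp only [ncard_edgeSet_induce]
  have hpiece :
      (F.edgeSet ∩ S.sym2).ncard + (OPT.edgeSet ∩ Sᶜ.sym2).ncard ≤ F.edgeSet.ncard := by
    rw [← ncard_edgeSet_piecewise]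
    exact hFmax _ (piecewise_le hFle hOle)
      (ncard_neighborSet_piecewise_le hFdeg hc.ncard_neighborSet_le)
  have hOPT :
      OPT.edgeSet.ncard = (OPT.edgeSet ∩ S.sym2).ncard + (OPT.edgeSet ∩ Sᶜ.sym2).ncard :=
    ncard_edgeSet_eq_inter_sym2_add_compl OPT fun u v huv => by
      simp only [S, Set.mem_iUnion₂]
      exact exists₂_congr fun Q hQ => hsep Q hQ u v huv
  have hck : ∀ Q ∈ Γ, ck k (F.induce Q.supp) ≤ (F.induce Q.supp).edgeSet.ncard :=
    fun Q _ => ck_le_ncard_edgeSet k _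
  rw [Finset.sum_tsub_distrib Γ hck]
  have := Finset.sum_le_sum hck
  omega

/-- Key inequality: if `F` is a maximum `k`-matching and `OPT` a maximum `k`-edge-colorable
subgraph, and `Γ` is a set of components of `F` not joined by any `OPT`-edge to their
complement on which induced subgraphs of `OPT` have at most `c_k(Q)` edges, then
`|E(OPT)| ≤ |E(F)| − Σ_{Q∈Γ} (|E(Q)| − c_k(Q))`. -/
theorem stmt16 {V : Type*} [Fintype V] (k : ℕ) (G F OPT : SimpleGraph V)
    (hFle : F ≤ G) (hFdeg : ∀ v : V, (F.neighborSet v).ncard ≤ k)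
    (hFmax : ∀ K : SimpleGraph V, K ≤ G → (∀ v : V, (K.neighborSet v).ncard ≤ k) →
      K.edgeSet.ncard ≤ F.edgeSet.ncard)
    (hOle : OPT ≤ G) (hOcol : ∃ c, IsProperEdgeColoring OPT k c)
    (hOmax : ∀ K : SimpleGraph V, K ≤ G → (∃ c, IsProperEdgeColoring K k c) →
      K.edgeSet.ncard ≤ OPT.edgeSet.ncard)
    (Γ : Finset F.ConnectedComponent)
    (hsep : ∀ Q ∈ Γ, ∀ u v : V, OPT.Adj u v → (u ∈ Q.supp ↔ v ∈ Q.supp))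
    (hind : ∀ Q ∈ Γ, {e ∈ OPT.edgeSet | ∀ w ∈ e, w ∈ Q.supp}.ncard ≤
      ck k (SimpleGraph.induce Q.supp F)) :
    OPT.edgeSet.ncard ≤ F.edgeSet.ncard -
      ∑ Q ∈ Γ, ((SimpleGraph.induce Q.supp F).edgeSet.ncard -
        ck k (SimpleGraph.induce Q.supp F)) :=
  stmt16_general k G F OPT hFle hFdeg hFmax hOle hOcol Γ hsep hind
end
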